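/- Let G=(V,E) be a finite simple undirected graph, let (S_t) be the volume-biased evolving set process started from a nonempty set S₀ ⊆ V, and let τ be any stopping time for this process. Then Ê_{S₀}[Σ_{j=0}^{τ-1} φ(S_j)²] ≤ 4 · Ê_{S₀}[log(μ(S_τ)/μ(S₀))] ≤ 4 log μ(V). -/

import Mathlib

open scoped Classical symmDiff

noncomputable section

variable {V : Type*} [Fintype V] [DecidableEq V]

/-- The volume `μ(S)` of a set of vertices: the sum of the degrees. -/
def vol (G : SimpleGraph V) [DecidableRel G.Adj] (S : Finset V) : ℝ :=
  ∑ x ∈ S, (G.degree x : ℝ)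

/-- The number of edges leaving `S`, i.e. `∂(S) = e(S, Sᶜ)`. -/
def bdry (G : SimpleGraph V) [DecidableRel G.Adj] (S : Finset V) : ℝ :=
  ∑ x ∈ S, ((Sᶜ.filter (G.Adj x)).card : ℝ)

/-- The conductance `φ(S) = ∂(S)/μ(S)`. -/
def phiCond (G : SimpleGraph V) [DecidableRel G.Adj] (S : Finset V) : ℝ :=
  bdry G S / vol G S

/-- The lazy random walk kernel `p(x,y)`: `1/2` if `x = y`, `1/(2 d(x))` if `x ~ y`,
and `0` otherwise. -/
def walkP (G : SimpleGraph V) [DecidableRel G.Adj] (x y : V) : ℝ :=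
  if x = y then 1/2 else if G.Adj x y then 1 / (2 * (G.degree x : ℝ)) else 0

/-- `p(x,S) = Σ_{y∈S} p(x,y)`. -/
def pset (G : SimpleGraph V) [DecidableRel G.Adj] (x : V) (S : Finset V) : ℝ :=
  ∑ y ∈ S, walkP G x y

/-- One step of the evolving set process from `S` with threshold `u`:
`S₁ = {y : p(y,S) ≥ u}`. -/
def esStep (G : SimpleGraph V) [DecidableRel G.Adj] (S : Finset V) (u : ℝ) : Finset V :=
  Finset.univ.filter fun y => u ≤ pset G y S

/-- The ESP transition kernel `K(S,S')`: the probability, for a uniform threshold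
`U ∈ [0,1]`, that `{y : p(y,S) ≥ U} = S'`. -/
def Kk (G : SimpleGraph V) [DecidableRel G.Adj] (S S' : Finset V) : ℝ :=
  (MeasureTheory.volume {u : ℝ | u ∈ Set.Icc (0:ℝ) 1 ∧ esStep G S u = S'}).toReal

/-- The volume-biased ESP transition kernel `K̂(S,S') = (μ(S')/μ(S)) K(S,S')`. -/
def Khat (G : SimpleGraph V) [DecidableRel G.Adj] (S S' : Finset V) : ℝ :=
  vol G S' / vol G S * Kk G S S'

/-- Expectation of a path functional `f` (depending only on coordinates `0, …, T`)
over length-`(T+1)` sample paths of the Markov chain with transition kernel `κ`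
started at `S₀`; the finite path is extended to an infinite one by freezing it
after time `T`. -/
def EpathN (κ : Finset V → Finset V → ℝ) (S₀ : Finset V) (T : ℕ)
    (f : (ℕ → Finset V) → ℝ) : ℝ :=
  ∑ w : Fin (T+1) → Finset V,
    if w 0 = S₀ then
      (∏ j : Fin T, κ (w j.castSucc) (w j.succ)) *
        f (fun n => w ⟨min n T, Nat.lt_succ_of_le (min_le_right n T)⟩)
    else 0

/-- `τ` is a stopping time for the natural filtration: the event `τ = n` depends only
on the first `n+1` coordinates of the path. -/
def IsStopping (τ : (ℕ → Finset V) → ℕ) : Prop :=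
  ∀ (s s' : ℕ → Finset V) (n : ℕ), τ s = n → (∀ i ≤ n, s' i = s i) → τ s' = n

/-!
Under the volume-biased kernel `log μ(S_t)` is a submartingale whose drift at `S` is at least
`φ(S)²/4`. Writing `r = μ(S')/μ(S)`, Jensen's inequality gives `Ê[log r] ≥ -2 log E[√r]`,
where `E` is the expectation under the plain kernel `K`; splitting the uniform threshold at `1/2`
and applying Cauchy–Schwarz on each half gives `E[√r] ≤ (√(1+φ) + √(1-φ))/2 ≤ 1 - φ²/8`.
Summing the drift up to time `τ ∧ N` bounds the left-hand side by
`4 Ê[log(μ(S_{τ∧N})/μ(S₀))]`, and `μ(S₀) ≥ 1`, `μ(S_t) ≤ μ(V)` bound this by `4 log μ(V)`.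
As the state space is finite, `τ` is a continuous function on the compact path space, hence
bounded, so `N` can be taken beyond `τ` and no limit is needed.
-/

section Volume

omit [DecidableEq V]

variable {G : SimpleGraph V} [DecidableRel G.Adj]

lemma vol_nonneg (S : Finset V) : 0 ≤ vol G S := Finset.sum_nonneg fun _ _ => Nat.cast_nonneg _

lemma vol_le_vol_univ (S : Finset V) : vol G S ≤ vol G Finset.univ :=
  Finset.sum_le_sum_of_subset_of_nonneg (Finset.subset_univ S) fun _ _ _ => Nat.cast_nonneg _

lemma one_le_vol_of_ne_zero {S : Finset V} (h : vol G S ≠ 0) : 1 ≤ vol G S := by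
  unfold vol at *
  exact_mod_cast Nat.one_le_iff_ne_zero.2 (by exact_mod_cast h)

lemma log_vol_univ_nonneg : 0 ≤ Real.log (vol G Finset.univ) := by
  rcases eq_or_ne (vol G Finset.univ) 0 with h | h
  · simp [h]
  · exact Real.log_nonneg (one_le_vol_of_ne_zero h)

lemma log_vol_div_le_log_vol_univ {S₀ : Finset V} (h0 : 1 ≤ vol G S₀) (S : Finset V) :
    Real.log (vol G S / vol G S₀) ≤ Real.log (vol G Finset.univ) := by
  rcases (vol_nonneg (G := G) S).eq_or_lt with h | h
  · simp [← h, log_vol_univ_nonneg]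
  rw [Real.log_div h.ne' (by linarith)]
  linarith [Real.log_nonneg h0, Real.log_le_log h (vol_le_vol_univ S)]

end Volume

section Boundary

variable {G : SimpleGraph V} [DecidableRel G.Adj]

variable (G) in
def degreeIn (x : V) (S : Finset V) : ℝ := ((S.filter (G.Adj x)).card : ℝ)

omit [Fintype V] [DecidableEq V] in
lemma degreeIn_nonneg (x : V) (S : Finset V) : 0 ≤ degreeIn G x S := Nat.cast_nonneg _

lemma degreeIn_add_degreeIn_compl (x : V) (S : Finset V) :
    degreeIn G x S + degreeIn G x Sᶜ = G.degree x := by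
  rw [degreeIn, degreeIn, ← Nat.cast_add, ← Finset.card_union_of_disjoint
    (Finset.disjoint_filter_filter disjoint_compl_right), ← Finset.filter_union,
    Finset.union_compl, ← SimpleGraph.neighborFinset_eq_filter,
    SimpleGraph.card_neighborFinset_eq_degree]

lemma degreeIn_le_degree (x : V) (S : Finset V) : degreeIn G x S ≤ G.degree x := by
  linarith [degreeIn_add_degreeIn_compl (G := G) x S, degreeIn_nonneg (G := G) x Sᶜ]

lemma bdry_eq_sum_compl_degreeIn (S : Finset V) : bdry G S = ∑ y ∈ Sᶜ, degreeIn G y S := by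
  simp only [bdry, degreeIn, Finset.card_filter, Nat.cast_sum]
  rw [Finset.sum_comm]
  simp only [G.adj_comm]

lemma sum_degreeIn_self (S : Finset V) : ∑ y ∈ S, degreeIn G y S = vol G S - bdry G S := by
  rw [vol, bdry, ← Finset.sum_sub_distrib]
  exact Finset.sum_congr rfl fun y _ => by
    rw [← degreeIn_add_degreeIn_compl y S]
    exact (add_sub_cancel_right _ _).symm

lemma bdry_le_vol (S : Finset V) : bdry G S ≤ vol G S :=
  Finset.sum_le_sum fun x _ => degreeIn_le_degree x Sᶜ

lemma phiCond_nonneg (S : Finset V) : 0 ≤ phiCond G S :=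
  div_nonneg (Finset.sum_nonneg fun _ _ => Nat.cast_nonneg _) (vol_nonneg S)

lemma phiCond_le_one (S : Finset V) : phiCond G S ≤ 1 :=
  div_le_one_of_le₀ (bdry_le_vol S) (vol_nonneg S)

lemma pset_eq (y : V) (S : Finset V) :
    pset G y S = (if y ∈ S then 1 / 2 else 0) + degreeIn G y S / (2 * G.degree y) := by
  have hwalk : ∀ z, walkP G y z =
      (if y = z then 1 / 2 else 0) + (if G.Adj y z then 1 / (2 * (G.degree y : ℝ)) else 0) := by
    intro z
    by_cases h : y = z
    · subst h
      simp [walkP]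
    · simp [walkP, h]
  rw [pset, Finset.sum_congr rfl fun z _ => hwalk z, Finset.sum_add_distrib, Finset.sum_ite_eq,
    ← Finset.sum_filter, Finset.sum_const, nsmul_eq_mul, mul_one_div]
  rfl

omit [DecidableEq V] in
lemma degreeIn_div_nonneg (y : V) (S : Finset V) : 0 ≤ degreeIn G y S / (2 * G.degree y) :=
  div_nonneg (degreeIn_nonneg y S) (by positivity)

lemma degreeIn_div_le_half (y : V) (S : Finset V) :
    degreeIn G y S / (2 * G.degree y) ≤ 1 / 2 := by
  rcases (Nat.cast_nonneg (α := ℝ) (G.degree y)).eq_or_lt with h | h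
  · simp [← h]
  · rw [div_le_iff₀ (by positivity)]
    linarith [degreeIn_le_degree (G := G) y S]

lemma degree_mul_degreeIn_div (y : V) (S : Finset V) :
    G.degree y * (degreeIn G y S / (2 * G.degree y)) = degreeIn G y S / 2 := by
  rcases eq_or_ne (G.degree y : ℝ) 0 with h | h
  · have : degreeIn G y S = 0 := le_antisymm (h ▸ degreeIn_le_degree y S) (degreeIn_nonneg y S)
    simp [h, this]
  · field_simp

end Boundary

section Kernel

open MeasureTheory Set

variable {G : SimpleGraph V} [DecidableRel G.Adj]

variable (G) in
def KkOf (μ : Measure ℝ) (S S' : Finset V) : ℝ := μ.real (esStep G S ⁻¹' {S'})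

lemma measurableSet_esStep_preimage (S S' : Finset V) :
    MeasurableSet (esStep G S ⁻¹' {S'}) := by
  have h : esStep G S ⁻¹' {S'} = ⋂ y, {u | u ≤ pset G y S ↔ y ∈ S'} := by
    ext u
    simp [esStep, Finset.ext_iff]
  rw [h]
  refine MeasurableSet.iInter fun y => ?_
  by_cases hy : y ∈ S'
  · simp only [hy, iff_true]
    exact measurableSet_Iic
  · simp only [hy, iff_false, not_le]
    exact measurableSet_Ioi

section FiniteMeasure

variable (μ : Measure ℝ) [IsFiniteMeasure μ]

lemma sum_KkOf_eq_measureReal (S : Finset V) (s : Finset (Finset V)) :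
    ∑ S' ∈ s, KkOf G μ S S' = μ.real (esStep G S ⁻¹' s) :=
  sum_measureReal_preimage_singleton s fun S' _ => measurableSet_esStep_preimage S S'

lemma sum_KkOf (S : Finset V) : ∑ S', KkOf G μ S S' = μ.real univ := by
  simp [sum_KkOf_eq_measureReal]

lemma sum_KkOf_mul_vol (S : Finset V) :
    ∑ S', KkOf G μ S S' * vol G S' = ∑ y, (G.degree y : ℝ) * μ.real (Iic (pset G y S)) := by
  have hfiber : ∀ y, μ.real (Iic (pset G y S)) = ∑ S' with y ∈ S', KkOf G μ S S' := by
    intro y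
    rw [sum_KkOf_eq_measureReal]
    congr 1
    ext u
    simp [esStep]
  simp only [vol, Finset.mul_sum, hfiber, Finset.sum_filter]
  rw [Finset.sum_comm]
  simp_rw [mul_ite, mul_zero, mul_comm, Finset.sum_ite_mem, Finset.univ_inter]

lemma KkOf_add (ν : Measure ℝ) [IsFiniteMeasure ν] (S S' : Finset V) :
    KkOf G (μ + ν) S S' = KkOf G μ S S' + KkOf G ν S S' :=
  measureReal_add_apply

end FiniteMeasure

lemma Kk_eq_KkOf_add (S S' : Finset V) :
    Kk G S S' = KkOf G (volume.restrict (Icc 0 (1 / 2))) S S'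
      + KkOf G (volume.restrict (Ioc (1 / 2) 1)) S S' := by
  rw [← KkOf_add, ← Measure.restrict_union
    ((Iic_disjoint_Ioc le_rfl).mono_left Icc_subset_Iic_self) measurableSet_Ioc,
    Icc_union_Ioc_eq_Icc (by norm_num) (by norm_num), KkOf,
    measureReal_restrict_apply' measurableSet_Icc, inter_comm]
  rfl

lemma sum_KkOf_lower (S : Finset V) :
    ∑ S', KkOf G (volume.restrict (Icc 0 (1 / 2))) S S' = 1 / 2 := by
  simp [sum_KkOf]

lemma sum_KkOf_upper (S : Finset V) :
    ∑ S', KkOf G (volume.restrict (Ioc (1 / 2) 1)) S S' = 1 / 2 := by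
  norm_num [sum_KkOf]

lemma Iic_inter_Icc (p a b : ℝ) : Iic p ∩ Icc a b = Icc a (min p b) := by
  ext u
  simp only [mem_inter_iff, mem_Iic, mem_Icc, le_min_iff]
  tauto

lemma Iic_inter_Ioc (p a b : ℝ) : Iic p ∩ Ioc a b = Ioc a (min p b) := by
  rw [inter_comm, Ioc_inter_Iic, inf_comm]

lemma sum_KkOf_lower_mul_vol (S : Finset V) :
    ∑ S', KkOf G (volume.restrict (Icc 0 (1 / 2))) S S' * vol G S'
      = (vol G S + bdry G S) / 2 := by
  have hy : ∀ y, (G.degree y : ℝ) * (volume.restrict (Icc 0 (1 / 2))).real (Iic (pset G y S))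
      = if y ∈ S then (G.degree y : ℝ) / 2 else degreeIn G y S / 2 := by
    intro y
    have h0 := degreeIn_div_nonneg (G := G) y S
    have h1 := degreeIn_div_le_half (G := G) y S
    rw [measureReal_restrict_apply' measurableSet_Icc, pset_eq, Iic_inter_Icc,
      Real.volume_real_Icc]
    split_ifs
    · rw [min_eq_right (by linarith), max_eq_left (by norm_num)]
      ring
    · rw [zero_add, min_eq_left h1, sub_zero, max_eq_left h0, degree_mul_degreeIn_div]
  rw [sum_KkOf_mul_vol, Finset.sum_congr rfl fun y _ => hy y, ← Finset.sum_add_sum_compl S,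
    Finset.sum_ite_of_true fun y hy => hy,
    Finset.sum_ite_of_false fun y hy => Finset.mem_compl.1 hy, ← Finset.sum_div,
    ← Finset.sum_div, bdry_eq_sum_compl_degreeIn, add_div]
  rfl

lemma sum_KkOf_upper_mul_vol (S : Finset V) :
    ∑ S', KkOf G (volume.restrict (Ioc (1 / 2) 1)) S S' * vol G S'
      = (vol G S - bdry G S) / 2 := by
  have hy : ∀ y, (G.degree y : ℝ) * (volume.restrict (Ioc (1 / 2) 1)).real (Iic (pset G y S))
      = if y ∈ S then degreeIn G y S / 2 else 0 := by
    intro y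
    have h0 := degreeIn_div_nonneg (G := G) y S
    have h1 := degreeIn_div_le_half (G := G) y S
    rw [measureReal_restrict_apply' measurableSet_Ioc, pset_eq, Iic_inter_Ioc,
      Real.volume_real_Ioc]
    split_ifs
    · rw [min_eq_left (by linarith), add_sub_cancel_left, max_eq_left h0,
        degree_mul_degreeIn_div]
    · rw [max_eq_right (by linarith [min_le_left (0 + degreeIn G y S / (2 * G.degree y)) 1]),
        mul_zero]
  rw [sum_KkOf_mul_vol, Finset.sum_congr rfl fun y _ => hy y, Finset.sum_ite_mem,
    Finset.univ_inter, ← Finset.sum_div, sum_degreeIn_self]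

lemma Kk_nonneg (S S' : Finset V) : 0 ≤ Kk G S S' := ENNReal.toReal_nonneg

lemma Khat_nonneg (S S' : Finset V) : 0 ≤ Khat G S S' :=
  mul_nonneg (div_nonneg (vol_nonneg S') (vol_nonneg S)) (Kk_nonneg S S')

lemma vol_pos_of_Khat_ne_zero {S S' : Finset V} (h : Khat G S S' ≠ 0) : 0 < vol G S' := by
  refine (vol_nonneg S').lt_of_ne fun h0 => h ?_
  rw [Khat, ← h0, zero_div, zero_mul]

lemma sum_Kk_mul_vol (S : Finset V) : ∑ S', Kk G S S' * vol G S' = vol G S := by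
  simp only [Kk_eq_KkOf_add, add_mul, Finset.sum_add_distrib, sum_KkOf_lower_mul_vol,
    sum_KkOf_upper_mul_vol]
  ring

lemma sum_Khat {S : Finset V} (h : vol G S ≠ 0) : ∑ S', Khat G S S' = 1 := by
  simp only [Khat, div_mul_eq_mul_div, ← Finset.sum_div, mul_comm (vol G _), sum_Kk_mul_vol,
    div_self h]

end Kernel

section Drift

open MeasureTheory Set

variable {G : SimpleGraph V} [DecidableRel G.Adj]

lemma sum_KkOf_mul_sqrt_le (μ : Measure ℝ) [IsFiniteMeasure μ] {S : Finset V}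
    (hS : 0 < vol G S) :
    ∑ S', KkOf G μ S S' * √(vol G S' / vol G S)
      ≤ √((∑ S', KkOf G μ S S') * ((∑ S', KkOf G μ S S' * vol G S') / vol G S)) := by
  have hK : ∀ S', 0 ≤ KkOf G μ S S' := fun _ => measureReal_nonneg
  have hKr : ∀ S', 0 ≤ KkOf G μ S S' * (vol G S' / vol G S) :=
    fun S' => mul_nonneg (hK S') (div_nonneg (vol_nonneg S') hS.le)
  have hsplit : ∀ S', KkOf G μ S S' * √(vol G S' / vol G S)
      = √(KkOf G μ S S') * √(KkOf G μ S S' * (vol G S' / vol G S)) := by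
    intro S'
    rw [Real.sqrt_mul (hK S'), ← mul_assoc, Real.mul_self_sqrt (hK S')]
  simp only [hsplit]
  refine (Real.sum_sqrt_mul_sqrt_le _ hK hKr).trans_eq ?_
  rw [← Real.sqrt_mul (Finset.sum_nonneg fun S' _ => hK S'), Finset.sum_div]
  simp only [mul_div_assoc]

lemma sqrt_one_add_add_sqrt_one_sub_le {φ : ℝ} (h0 : 0 ≤ φ) (h1 : φ ≤ 1) :
    √(1 + φ) + √(1 - φ) ≤ 2 - φ ^ 2 / 4 := by
  have hA := Real.sq_sqrt (show 0 ≤ 1 + φ by linarith)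
  have hB := Real.sq_sqrt (show 0 ≤ 1 - φ by linarith)
  have hAB : √(1 + φ) * √(1 - φ) ≤ 1 - φ ^ 2 / 2 := by
    rw [← Real.sqrt_mul (by linarith)]
    exact Real.sqrt_le_iff.2 ⟨by nlinarith, by nlinarith⟩
  refine abs_le_of_sq_le_sq' ?_ (by nlinarith) |>.2
  nlinarith [Real.sqrt_nonneg (1 + φ), Real.sqrt_nonneg (1 - φ)]

lemma sum_Kk_mul_sqrt_le {S : Finset V} (hS : 0 < vol G S) :
    ∑ S', Kk G S S' * √(vol G S' / vol G S) ≤ 1 - phiCond G S ^ 2 / 8 := by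
  have hφ0 := phiCond_nonneg (G := G) S
  have hφ1 := phiCond_le_one (G := G) S
  have hbdry : bdry G S = phiCond G S * vol G S := by
    rw [phiCond, div_mul_cancel₀ _ hS.ne']
  have hlower := sum_KkOf_mul_sqrt_le (G := G) (volume.restrict (Icc 0 (1 / 2))) hS
  have hupper := sum_KkOf_mul_sqrt_le (G := G) (volume.restrict (Ioc (1 / 2) 1)) hS
  rw [sum_KkOf_lower_mul_vol, sum_KkOf_lower, hbdry] at hlower
  rw [sum_KkOf_upper_mul_vol, sum_KkOf_upper, hbdry] at hupper
  have h4 : √4 = 2 := by rw [show (4 : ℝ) = 2 ^ 2 by norm_num, Real.sqrt_sq zero_le_two]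
  have hlower' : 1 / 2 * ((vol G S + phiCond G S * vol G S) / 2 / vol G S)
      = (1 + phiCond G S) / 4 := by
    field_simp
    ring
  have hupper' : 1 / 2 * ((vol G S - phiCond G S * vol G S) / 2 / vol G S)
      = (1 - phiCond G S) / 4 := by
    field_simp
    ring
  rw [hlower', Real.sqrt_div' _ (by norm_num), h4] at hlower
  rw [hupper', Real.sqrt_div' _ (by norm_num), h4] at hupper
  simp only [Kk_eq_KkOf_add, add_mul, Finset.sum_add_distrib]
  linarith [sqrt_one_add_add_sqrt_one_sub_le hφ0 hφ1]

lemma Khat_mul_inv_sqrt (S S' : Finset V) :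
    Khat G S S' * (√(vol G S' / vol G S))⁻¹ = Kk G S S' * √(vol G S' / vol G S) := by
  rw [Khat, mul_right_comm, ← div_eq_mul_inv, Real.div_sqrt, mul_comm]

theorem phiCond_sq_div_four_le_sum_Khat_mul_log {S : Finset V} (hS : 0 < vol G S) :
    phiCond G S ^ 2 / 4 ≤ ∑ S', Khat G S S' * Real.log (vol G S' / vol G S) := by
  set t := Finset.univ.filter fun S' => 0 < vol G S'
  have hsupp : ∀ f : Finset V → ℝ, ∑ S' ∈ t, Khat G S S' * f S' = ∑ S', Khat G S S' * f S' :=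
    fun f => Finset.sum_filter_of_ne fun S' _ h => vol_pos_of_Khat_ne_zero (left_ne_zero_of_mul h)
  have hw1 : ∑ S' ∈ t, Khat G S S' = 1 := by
    have := hsupp fun _ => 1
    simp only [mul_one] at this
    rw [this, sum_Khat hS.ne']
  have hx : ∀ S' ∈ t, (√(vol G S' / vol G S))⁻¹ ∈ Ioi 0 := fun S' hS' =>
    inv_pos.2 (Real.sqrt_pos.2 (div_pos (Finset.mem_filter.1 hS').2 hS))
  -- Jensen at the points `r^(-1/2)`, whose `K̂`-mean is the `K`-mean of `√r`
  have hjensen := strictConcaveOn_log_Ioi.concaveOn.le_map_sum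
    (fun S' _ => Khat_nonneg S S') hw1 hx
  have hm := (convex_Ioi 0).sum_mem (fun S' _ => Khat_nonneg S S') hw1 hx
  simp only [smul_eq_mul, hsupp] at hjensen hm
  simp only [Khat_mul_inv_sqrt] at hjensen hm
  have hlog : ∑ S', Khat G S S' * Real.log (√(vol G S' / vol G S))⁻¹
      = -(∑ S', Khat G S S' * Real.log (vol G S' / vol G S)) / 2 := by
    simp only [Real.log_inv, Real.log_sqrt (div_nonneg (vol_nonneg _) hS.le), Finset.sum_div,
      ← Finset.sum_neg_distrib]
    exact Finset.sum_congr rfl fun S' _ => by ring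
  rw [hlog] at hjensen
  linarith [Real.log_le_sub_one_of_pos (mem_Ioi.1 hm), sum_Kk_mul_sqrt_le hS]

lemma log_div_add_phiCond_sq_div_four_le {S : Finset V} (hS : 0 < vol G S) {c : ℝ}
    (hc : 0 < c) :
    Real.log (vol G S / c) + phiCond G S ^ 2 / 4
      ≤ ∑ S', Khat G S S' * Real.log (vol G S' / c) := by
  have hsplit : ∀ S', Khat G S S' * Real.log (vol G S' / c)
      = Khat G S S' * Real.log (vol G S' / vol G S) + Khat G S S' * Real.log (vol G S / c) := by
    intro S'
    by_cases hK : Khat G S S' = 0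
    · simp [hK]
    have hS' := vol_pos_of_Khat_ne_zero hK
    rw [Real.log_div hS'.ne' hc.ne', Real.log_div hS'.ne' hS.ne', Real.log_div hS.ne' hc.ne']
    ring
  rw [Finset.sum_congr rfl fun S' _ => hsplit S', Finset.sum_add_distrib, ← Finset.sum_mul,
    sum_Khat hS.ne', one_mul]
  linarith [phiCond_sq_div_four_le_sum_Khat_mul_log hS]

end Drift

section PathOperations

omit [Fintype V] [DecidableEq V]

variable {κ : Finset V → Finset V → ℝ}

variable (κ) in
def pathWeight {T : ℕ} (w : Fin (T + 1) → Finset V) : ℝ :=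
  ∏ j : Fin T, κ (w j.castSucc) (w j.succ)

def freeze {T : ℕ} (w : Fin (T + 1) → Finset V) : ℕ → Finset V :=
  fun n => w ⟨min n T, Nat.lt_succ_of_le (min_le_right n T)⟩

def extendPath (s : ℕ → Finset V) (T : ℕ) (S' : Finset V) : ℕ → Finset V :=
  fun n => if n ≤ T then s n else S'

lemma extendPath_of_le (s : ℕ → Finset V) {T i : ℕ} (S' : Finset V) (hi : i ≤ T) :
    extendPath s T S' i = s i := if_pos hi

lemma freeze_snoc {T : ℕ} (w : Fin (T + 1) → Finset V) (S' : Finset V) :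
    freeze (Fin.snoc w S' : Fin (T + 2) → Finset V) = extendPath (freeze w) T S' := by
  funext n
  by_cases hn : n ≤ T
  · simp only [freeze, extendPath, hn, if_true, min_eq_left (hn.trans T.le_succ),
      min_eq_left hn]
    exact Fin.snoc_castSucc (α := fun _ => Finset V) (i := ⟨n, Nat.lt_succ_of_le hn⟩) ..
  · simp only [freeze, extendPath, hn, if_false, min_eq_right (Nat.succ_le_of_lt (not_le.1 hn))]
    exact Fin.snoc_last (α := fun _ => Finset V) ..

lemma freeze_self {T : ℕ} (w : Fin (T + 1) → Finset V) : freeze w T = w (Fin.last T) := by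
  simp [freeze, Fin.last]

lemma pathWeight_snoc {T : ℕ} (w : Fin (T + 1) → Finset V) (S' : Finset V) :
    pathWeight κ (Fin.snoc w S' : Fin (T + 2) → Finset V)
      = pathWeight κ w * κ (w (Fin.last T)) S' := by
  rw [pathWeight, Fin.prod_univ_castSucc]
  simp only [Fin.succ_castSucc, Fin.snoc_castSucc, Fin.succ_last, Fin.snoc_last]
  rfl

end PathOperations

section PathExpectation

variable {κ : Finset V → Finset V → ℝ} {S₀ : Finset V}

lemma EpathN_eq (T : ℕ) (f : (ℕ → Finset V) → ℝ) :
    EpathN κ S₀ T f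
      = ∑ w : Fin (T + 1) → Finset V, (if w 0 = S₀ then pathWeight κ w else 0) * f (freeze w) := by
  simp only [ite_mul, zero_mul]
  rfl

lemma EpathN_zero (f : (ℕ → Finset V) → ℝ) : EpathN κ S₀ 0 f = f fun _ => S₀ := by
  rw [EpathN_eq, ← (Equiv.funUnique (Fin 1) (Finset V)).symm.sum_comp]
  simp [pathWeight]
  rfl

theorem EpathN_succ (T : ℕ) (f : (ℕ → Finset V) → ℝ) :
    EpathN κ S₀ (T + 1) f
      = EpathN κ S₀ T fun s => ∑ S', κ (s T) S' * f (extendPath s T S') := by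
  rw [EpathN_eq, EpathN_eq, ← (Fin.snocEquiv fun _ => Finset V).sum_comp, Fintype.sum_prod_type,
    Finset.sum_comm]
  refine Finset.sum_congr rfl fun w _ => ?_
  have hsnoc : ∀ S', (Fin.snocEquiv fun _ => Finset V) (S', w) = Fin.snoc w S' := fun _ => rfl
  have hzero : ∀ S', (Fin.snoc w S' : Fin (T + 2) → Finset V) 0 = w 0 :=
    fun S' => Fin.snoc_castSucc (α := fun _ => Finset V) (i := 0) ..
  simp only [hsnoc, hzero, freeze_snoc, pathWeight_snoc, freeze_self, Finset.mul_sum]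
  refine Finset.sum_congr rfl fun S' _ => ?_
  split_ifs <;> ring

lemma EpathN_add (T : ℕ) (f g : (ℕ → Finset V) → ℝ) :
    EpathN κ S₀ T (fun s => f s + g s) = EpathN κ S₀ T f + EpathN κ S₀ T g := by
  simp only [EpathN_eq, mul_add, Finset.sum_add_distrib]

lemma EpathN_div_const (T : ℕ) (f : (ℕ → Finset V) → ℝ) (c : ℝ) :
    EpathN κ S₀ T (fun s => f s / c) = EpathN κ S₀ T f / c := by
  simp only [EpathN_eq, mul_div_assoc, Finset.sum_div]

lemma EpathN_sum {ι : Type*} (I : Finset ι) (T : ℕ) (f : ι → (ℕ → Finset V) → ℝ) :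
    EpathN κ S₀ T (fun s => ∑ i ∈ I, f i s) = ∑ i ∈ I, EpathN κ S₀ T (f i) := by
  simp only [EpathN_eq, Finset.mul_sum]
  exact Finset.sum_comm

lemma EpathN_eq_zero_of_forall {T : ℕ} {f : (ℕ → Finset V) → ℝ} (hf : ∀ s, f s = 0) :
    EpathN κ S₀ T f = 0 := by
  simp [EpathN_eq, hf]

end PathExpectation

section VolumeBiased

variable {G : SimpleGraph V} [DecidableRel G.Adj] {S₀ : Finset V}

lemma vol_pos_of_pathWeight_ne_zero (h0 : 0 < vol G S₀) {T : ℕ} {w : Fin (T + 1) → Finset V}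
    (hw0 : w 0 = S₀) (hw : pathWeight (Khat G) w ≠ 0) (j : Fin (T + 1)) : 0 < vol G (w j) := by
  induction j using Fin.cases with
  | zero => rwa [hw0]
  | succ i => exact vol_pos_of_Khat_ne_zero (Finset.prod_ne_zero_iff.1 hw i (Finset.mem_univ i))

lemma EpathN_Khat_mono (h0 : 0 < vol G S₀) {T : ℕ} {f g : (ℕ → Finset V) → ℝ}
    (hfg : ∀ s, (∀ i, 0 < vol G (s i)) → f s ≤ g s) :
    EpathN (Khat G) S₀ T f ≤ EpathN (Khat G) S₀ T g := by
  rw [EpathN_eq, EpathN_eq]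
  refine Finset.sum_le_sum fun w _ => ?_
  split_ifs with hw0
  · by_cases hw : pathWeight (Khat G) w = 0
    · simp [hw]
    · exact mul_le_mul_of_nonneg_left
        (hfg _ fun i => vol_pos_of_pathWeight_ne_zero h0 hw0 hw _)
        (Finset.prod_nonneg fun j _ => Khat_nonneg _ _)
  · simp

lemma EpathN_Khat_congr (h0 : 0 < vol G S₀) {T : ℕ} {f g : (ℕ → Finset V) → ℝ}
    (hfg : ∀ s, (∀ i, 0 < vol G (s i)) → f s = g s) :
    EpathN (Khat G) S₀ T f = EpathN (Khat G) S₀ T g :=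
  le_antisymm (EpathN_Khat_mono h0 fun s hs => (hfg s hs).le)
    (EpathN_Khat_mono h0 fun s hs => (hfg s hs).ge)

lemma EpathN_Khat_of_le (h0 : 0 < vol G S₀) {m N : ℕ} (hmN : m ≤ N) {f : (ℕ → Finset V) → ℝ}
    (hf : ∀ s s', (∀ i ≤ m, s i = s' i) → f s = f s') :
    EpathN (Khat G) S₀ N f = EpathN (Khat G) S₀ m f := by
  induction N, hmN using Nat.le_induction with
  | base => rfl
  | succ N hmN ih =>
    rw [EpathN_succ, ← ih]
    refine EpathN_Khat_congr h0 fun s hs => ?_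
    have hext : ∀ S', f (extendPath s N S') = f s := fun S' =>
      hf _ _ fun i hi => extendPath_of_le s S' (hi.trans hmN)
    simp only [hext, ← Finset.sum_mul, sum_Khat (hs N).ne', one_mul]

lemma EpathN_Khat_const (h0 : 0 < vol G S₀) (T : ℕ) (c : ℝ) :
    EpathN (Khat G) S₀ T (fun _ => c) = c :=
  (EpathN_Khat_of_le h0 T.zero_le fun _ _ _ => rfl).trans (EpathN_zero _)

lemma EpathN_Khat_eq_zero_of_vol_eq_zero (h0 : vol G S₀ = 0) {T : ℕ}
    {f : (ℕ → Finset V) → ℝ} (hf : f (fun _ => S₀) = 0) : EpathN (Khat G) S₀ T f = 0 := by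
  induction T generalizing f with
  | zero => rwa [EpathN_zero]
  | succ T ih => exact (EpathN_succ _ _).trans (ih (by simp [Khat, h0]))

end VolumeBiased

section Stopping

omit [DecidableEq V]

variable {τ : (ℕ → Finset V) → ℕ}

omit [Fintype V] in
lemma IsStopping.apply_eq_of_eqOn (hτ : IsStopping τ) {s s' : ℕ → Finset V} {N : ℕ}
    (h : ∀ i ≤ N, s' i = s i) (hs : τ s ≤ N) : τ s' = τ s :=
  hτ s s' (τ s) rfl fun i hi => h i (hi.trans hs)

omit [Fintype V] in
lemma IsStopping.apply_eq_iff_of_eqOn (hτ : IsStopping τ) {s s' : ℕ → Finset V} {N : ℕ}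
    (h : ∀ i ≤ N, s' i = s i) : τ s' = N ↔ τ s = N :=
  ⟨fun hs' => hτ s' s N hs' fun i hi => (h i hi).symm, fun hs => hτ s s' N hs h⟩

theorem IsStopping.bddAbove_range (hτ : IsStopping τ) : BddAbove (Set.range τ) := by
  let _ : TopologicalSpace (Finset V) := ⊥
  have : DiscreteTopology (Finset V) := ⟨rfl⟩
  have hcont : Continuous τ := by
    refine continuous_discrete_rng.2 fun n => isOpen_iff_forall_mem_open.2 fun s hs => ?_
    refine ⟨(Set.Iic n).pi fun i => {s i}, fun s' hs' => ?_,
      isOpen_set_pi (Set.finite_Iic n) fun i _ => isOpen_discrete _, fun i _ => rfl⟩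
    exact hτ s s' n hs fun i hi => hs' i hi
  exact (isCompact_range hcont).bddAbove

end Stopping

section OptionalStopping

variable {G : SimpleGraph V} [DecidableRel G.Adj] {S₀ : Finset V} {τ : (ℕ → Finset V) → ℕ}

variable (G S₀ τ) in
def logVolStopped (N : ℕ) (s : ℕ → Finset V) : ℝ :=
  Real.log (vol G (s (min (τ s) N)) / vol G S₀)

lemma logVolStopped_add_le_sum_Khat (hτ : IsStopping τ) (h0 : 0 < vol G S₀) {N : ℕ}
    {s : ℕ → Finset V} (hs : 0 < vol G (s N)) :
    logVolStopped G S₀ τ N s + (if N < τ s then phiCond G (s N) ^ 2 else 0) / 4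
      ≤ ∑ S', Khat G (s N) S' * logVolStopped G S₀ τ (N + 1) (extendPath s N S') := by
  have hagree : ∀ S', ∀ i ≤ N, extendPath s N S' i = s i :=
    fun S' i hi => extendPath_of_le s S' hi
  by_cases hτN : τ s ≤ N
  · have hL : ∀ S', logVolStopped G S₀ τ (N + 1) (extendPath s N S')
        = logVolStopped G S₀ τ N s := by
      intro S'
      rw [logVolStopped, logVolStopped, hτ.apply_eq_of_eqOn (hagree S') hτN,
        min_eq_left hτN, min_eq_left (hτN.trans N.le_succ), hagree S' _ hτN]
    simp only [hL, ← Finset.sum_mul, sum_Khat hs.ne', one_mul, if_neg (not_lt.2 hτN), zero_div,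
      add_zero, le_refl]
  · have hlt : ∀ S', N < τ (extendPath s N S') := fun S' => by
      by_contra h
      have hτs : τ s = τ (extendPath s N S') :=
        hτ.apply_eq_of_eqOn (fun i hi => (hagree S' i hi).symm) (not_lt.1 h)
      exact hτN (hτs ▸ not_lt.1 h)
    have hL : ∀ S', logVolStopped G S₀ τ (N + 1) (extendPath s N S')
        = Real.log (vol G S' / vol G S₀) := by
      intro S'
      rw [logVolStopped, min_eq_right (Nat.succ_le_of_lt (hlt S')), extendPath,
        if_neg (Nat.not_succ_le_self N)]
    rw [logVolStopped, min_eq_right (not_le.1 hτN).le, if_pos (not_le.1 hτN)]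
    simp only [hL]
    linarith [log_div_add_phiCond_sq_div_four_le hs h0]

lemma EpathN_logVolStopped_succ (hτ : IsStopping τ) (h0 : 0 < vol G S₀) (N : ℕ) :
    EpathN (Khat G) S₀ N (logVolStopped G S₀ τ N)
        + EpathN (Khat G) S₀ N (fun s => if N < τ s then phiCond G (s N) ^ 2 else 0) / 4
      ≤ EpathN (Khat G) S₀ (N + 1) (logVolStopped G S₀ τ (N + 1)) := by
  rw [← EpathN_div_const, ← EpathN_add, EpathN_succ]
  exact EpathN_Khat_mono h0 fun s hs => logVolStopped_add_le_sum_Khat hτ h0 (hs N)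

lemma sum_EpathN_phiCond_sq_le (hτ : IsStopping τ) (h0 : 0 < vol G S₀) (N : ℕ) :
    ∑ t ∈ Finset.range N,
        EpathN (Khat G) S₀ t (fun s => if t < τ s then phiCond G (s t) ^ 2 else 0)
      ≤ 4 * EpathN (Khat G) S₀ N (logVolStopped G S₀ τ N) := by
  induction N with
  | zero => simp [EpathN_zero, logVolStopped, div_self h0.ne']
  | succ N ih =>
    rw [Finset.sum_range_succ]
    linarith [EpathN_logVolStopped_succ hτ h0 N]

lemma EpathN_logVolStopped_eq_sum (hτ : IsStopping τ) (h0 : 0 < vol G S₀) {N : ℕ}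
    (hN : ∀ s, τ s ≤ N) :
    EpathN (Khat G) S₀ N (logVolStopped G S₀ τ N)
      = ∑ t ∈ Finset.range (N + 1), EpathN (Khat G) S₀ t
          (fun s => if τ s = t then Real.log (vol G (s t) / vol G S₀) else 0) := by
  have hL : logVolStopped G S₀ τ N = fun s => ∑ t ∈ Finset.range (N + 1),
      if τ s = t then Real.log (vol G (s t) / vol G S₀) else 0 := by
    funext s
    rw [logVolStopped, min_eq_left (hN s), Finset.sum_ite_eq,
      if_pos (Finset.mem_range.2 (Nat.lt_succ_of_le (hN s)))]
  rw [hL, EpathN_sum]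
  refine Finset.sum_congr rfl fun t ht => EpathN_Khat_of_le h0
    (Nat.le_of_lt_succ (Finset.mem_range.1 ht)) fun s s' hss' => ?_
  simp only [hτ.apply_eq_iff_of_eqOn (fun i hi => (hss' i hi).symm), hss' t le_rfl]

lemma EpathN_logVolStopped_le (h0 : 0 < vol G S₀) (N : ℕ) :
    EpathN (Khat G) S₀ N (logVolStopped G S₀ τ N) ≤ Real.log (vol G Finset.univ) :=
  (EpathN_Khat_mono h0 fun _ _ =>
      log_vol_div_le_log_vol_univ (one_le_vol_of_ne_zero h0.ne') _).trans_eq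
    (EpathN_Khat_const h0 N _)

end OptionalStopping
theorem statement9_general (G : SimpleGraph V) [DecidableRel G.Adj]
    (S₀ : Finset V)
    (τ : (ℕ → Finset V) → ℕ) (hτ : IsStopping τ) :
    (∑' t : ℕ, EpathN (Khat G) S₀ t fun s => if t < τ s then phiCond G (s t) ^ 2 else 0) ≤
        4 * (∑' t : ℕ, EpathN (Khat G) S₀ t
          fun s => if τ s = t then Real.log (vol G (s t) / vol G S₀) else 0) ∧
      4 * (∑' t : ℕ, EpathN (Khat G) S₀ t
          fun s => if τ s = t then Real.log (vol G (s t) / vol G S₀) else 0) ≤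
        4 * Real.log (vol G Finset.univ) := by
  rcases (vol_nonneg (G := G) S₀).eq_or_lt with h0 | h0
  · -- `K̂(S₀, ·) = 0`, and at time `0` both integrands vanish since `x / 0 = 0` and `log 0 = 0`
    have hA : ∀ t, EpathN (Khat G) S₀ t
        (fun s => if t < τ s then phiCond G (s t) ^ 2 else 0) = 0 := fun t =>
      EpathN_Khat_eq_zero_of_vol_eq_zero h0.symm (by simp [phiCond, ← h0])
    have hB : ∀ t, EpathN (Khat G) S₀ t
        (fun s => if τ s = t then Real.log (vol G (s t) / vol G S₀) else 0) = 0 := fun t =>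
      EpathN_Khat_eq_zero_of_vol_eq_zero h0.symm (by simp [← h0])
    simp only [hA, hB, tsum_zero, mul_zero, le_refl, true_and]
    linarith [log_vol_univ_nonneg (G := G)]
  obtain ⟨N, hN⟩ := hτ.bddAbove_range
  have hτN : ∀ s, τ s ≤ N := fun s => hN ⟨s, rfl⟩
  rw [tsum_eq_sum (s := Finset.range N) ?vanishA, tsum_eq_sum (s := Finset.range (N + 1)) ?vanishB,
    ← EpathN_logVolStopped_eq_sum hτ h0 hτN]
  · exact ⟨sum_EpathN_phiCond_sq_le hτ h0 N, by linarith [EpathN_logVolStopped_le (τ := τ) h0 N]⟩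
  case vanishA =>
    exact fun t ht => EpathN_eq_zero_of_forall fun s =>
      if_neg (not_lt.2 ((hτN s).trans (not_lt.1 (Finset.mem_range.not.1 ht))))
  case vanishB =>
    exact fun t ht => EpathN_eq_zero_of_forall fun s =>
      if_neg ((Nat.lt_succ_of_le (hτN s)).trans_le (not_lt.1 (Finset.mem_range.not.1 ht))).ne

/-- Lemma 4: for the volume-biased evolving set process started from a nonempty set `S₀`
and any stopping time `τ`,
`Ê_{S₀}[Σ_{j=0}^{τ-1} φ(S_j)²] ≤ 4 Ê_{S₀}[log(μ(S_τ)/μ(S₀))] ≤ 4 log μ(V)`. Both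
expectations are written as sums over time of finite-horizon path expectations. -/
theorem statement9 (G : SimpleGraph V) [DecidableRel G.Adj]
    (S₀ : Finset V) (hS₀ : S₀.Nonempty)
    (τ : (ℕ → Finset V) → ℕ) (hτ : IsStopping τ) :
    (∑' t : ℕ, EpathN (Khat G) S₀ t fun s => if t < τ s then phiCond G (s t) ^ 2 else 0) ≤
        4 * (∑' t : ℕ, EpathN (Khat G) S₀ t
          fun s => if τ s = t then Real.log (vol G (s t) / vol G S₀) else 0) ∧
      4 * (∑' t : ℕ, EpathN (Khat G) S₀ t
          fun s => if τ s = t then Real.log (vol G (s t) / vol G S₀) else 0) ≤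
        4 * Real.log (vol G Finset.univ) :=
  statement9_general G S₀ τ hτ
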